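/- arXiv:0806.2068 — 4 statements merged into one kernel-verified Lean document; each statement's English description precedes it below -/
import Mathlib

section
/- Let d, n be positive integers such that φ(m) > d for every integer m > n. If M is a d×d matrix over ℚ that is torsion (i.e., M^p = M^q for some distinct naturals p, q), then the minimal polynomial of M divides z^d · ∏_{j=1}^n γ_j(z), where γ_j denotes the j-th cyclotomic polynomial. -/
/-!
A torsion matrix `M` with `M ^ p = M ^ q`, `p < q`, is a root of `X ^ p * (X ^ (q - p) - 1)`,
and `X ^ (q - p) - 1` is the product of the irreducible cyclotomic polynomials `Φ_i`, `i ∣ q - p`.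
The minimal polynomial has degree at most `d`, so it is coprime to every `Φ_i` with `i > n`,
whose degree `φ i` exceeds `d`; and the power of `X` it contains is at most `X ^ d`.
-/

open Polynomial Finset

theorem Matrix.natDegree_minpoly_le {ι K : Type*} [Fintype ι] [DecidableEq ι] [Field K]
    (M : Matrix ι ι K) : (minpoly K M).natDegree ≤ Fintype.card ι :=
  M.charpoly_natDegree_eq_dim ▸
    natDegree_le_of_dvd M.minpoly_dvd_charpoly M.charpoly_monic.ne_zero

theorem minpoly.dvd_X_pow_mul_X_pow_sub_one_of_pow_eq {K A : Type*} [Field K] [Ring A]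
    [Algebra K A] {x : A} {p q : ℕ} (hpq : p ≤ q) (h : x ^ p = x ^ q) :
    minpoly K x ∣ X ^ p * (X ^ (q - p) - 1) :=
  minpoly.dvd K x (by simp [mul_sub, ← pow_add, Nat.add_sub_cancel' hpq, h])

theorem Irreducible.isCoprime_of_natDegree_lt {K : Type*} [Field K] {q f : K[X]}
    (hq : Irreducible q) (hf : f ≠ 0) (hlt : f.natDegree < q.natDegree) : IsCoprime q f :=
  hq.coprime_iff_not_dvd.mpr fun hdvd => hlt.not_ge (natDegree_le_of_dvd hdvd hf)

namespace Polynomial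

theorem dvd_X_pow_natDegree_mul_of_dvd_X_pow_mul {K : Type*} [Field K] {f h : K[X]} {p : ℕ}
    (hf : f ≠ 0) (hdvd : f ∣ X ^ p * h) : f ∣ X ^ f.natDegree * h := by
  obtain ⟨g, hfg, hXg⟩ := f.exists_eq_pow_rootMultiplicity_mul_and_not_dvd hf 0
  rw [map_zero, sub_zero] at hfg hXg
  have hgh : g ∣ h :=
    (irreducible_X.coprime_iff_not_dvd.mpr hXg).pow_left.symm.dvd_of_dvd_mul_left
      ((Dvd.intro_left _ hfg.symm).trans hdvd)
  have hmult : f.rootMultiplicity 0 ≤ f.natDegree := by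
    simpa using natDegree_le_of_dvd (Dvd.intro _ hfg.symm) hf
  calc f = X ^ f.rootMultiplicity 0 * g := hfg
    _ ∣ X ^ f.natDegree * h := mul_dvd_mul (pow_dvd_pow X hmult) hgh

theorem dvd_mul_prod_cyclotomic_Icc_of_dvd_mul_X_pow_sub_one {f g : ℚ[X]} {k n : ℕ}
    (hk : 0 < k) (hf : f ≠ 0) (hdeg : ∀ m, n < m → f.natDegree < m.totient)
    (hdvd : f ∣ g * (X ^ k - 1)) : f ∣ g * ∏ j ∈ Icc 1 n, cyclotomic j ℚ := by
  rw [← prod_cyclotomic_eq_X_pow_sub_one hk,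
    ← prod_filter_mul_prod_filter_not k.divisors (· ≤ n), ← mul_assoc] at hdvd
  have hcop : IsCoprime f (∏ i ∈ k.divisors with ¬i ≤ n, cyclotomic i ℚ) := by
    refine IsCoprime.prod_right fun i hi => ?_
    obtain ⟨hik, hin⟩ := mem_filter.mp hi
    have hi0 := Nat.pos_of_mem_divisors hik
    refine ((cyclotomic.irreducible_rat hi0).isCoprime_of_natDegree_lt hf ?_).symm
    rw [natDegree_cyclotomic]
    exact hdeg i (by omega)
  have hsub : {i ∈ k.divisors | i ≤ n} ⊆ Icc 1 n := fun i hi =>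
    mem_Icc.mpr ⟨Nat.pos_of_mem_divisors (mem_filter.mp hi).1, (mem_filter.mp hi).2⟩
  exact (hcop.dvd_of_dvd_mul_right hdvd).trans
    (mul_dvd_mul_left g (prod_dvd_prod_of_subset _ _ _ hsub))

end Polynomial

theorem minpoly_dvd_of_torsion_general (d n : ℕ)
    (hphi : ∀ m : ℕ, n < m → d < Nat.totient m)
    (M : Matrix (Fin d) (Fin d) ℚ)
    (htor : ∃ p q : ℕ, p ≠ q ∧ M ^ p = M ^ q) :
    minpoly ℚ M ∣
      Polynomial.X ^ d * ∏ j ∈ Finset.Icc 1 n, Polynomial.cyclotomic j ℚ := by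
  obtain ⟨p, q, hpq, hM⟩ := htor
  wlog hlt : p < q generalizing p q
  · exact this q p hpq.symm hM.symm (by omega)
  have hm0 : minpoly ℚ M ≠ 0 := minpoly.ne_zero M.isIntegral
  have hdeg : (minpoly ℚ M).natDegree ≤ d := by simpa using M.natDegree_minpoly_le
  have hcyc : minpoly ℚ M ∣ X ^ p * ∏ j ∈ Icc 1 n, cyclotomic j ℚ :=
    dvd_mul_prod_cyclotomic_Icc_of_dvd_mul_X_pow_sub_one (by omega) hm0
      (fun m hm => hdeg.trans_lt (hphi m hm))
      (minpoly.dvd_X_pow_mul_X_pow_sub_one_of_pow_eq hlt.le hM)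
  exact (dvd_X_pow_natDegree_mul_of_dvd_X_pow_mul hm0 hcyc).trans
    (mul_dvd_mul_right (pow_dvd_pow X hdeg) _)

theorem minpoly_dvd_of_torsion (d n : ℕ) (hd : 0 < d) (hn : 0 < n)
    (hphi : ∀ m : ℕ, n < m → d < Nat.totient m)
    (M : Matrix (Fin d) (Fin d) ℚ)
    (htor : ∃ p q : ℕ, p ≠ q ∧ M ^ p = M ^ q) :
    minpoly ℚ M ∣
      Polynomial.X ^ d * ∏ j ∈ Finset.Icc 1 n, Polynomial.cyclotomic j ℚ :=
  minpoly_dvd_of_torsion_general d n hphi M htor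
end

section
/- For every positive integer d, every d×d torsion matrix M over ℚ satisfies M^((2d²)! + d) = M^d. -/
/-!
The minimal polynomial `μ` of a torsion matrix divides `X ^ p * (X ^ e - 1)`, so `μ = μ₁ * μ₂` with
`μ₁` a power of `X` of degree at most `d` and `μ₂` a squarefree divisor of `X ^ e - 1`. Every
irreducible factor of `μ₂` is a cyclotomic polynomial `Φ n` with `φ n ≤ d`. Each prime power
`p ^ k` exactly dividing `n` satisfies `p ^ k ≤ 2 φ (p ^ k) ≤ 2 d`, hence `n ∣ (2 d)! ∣ (2 d²)!` and
`Φ n ∣ X ^ (2 d²)! - 1`; being squarefree, `μ₂` divides `X ^ (2 d²)! - 1` as well.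
-/

open Polynomial Nat

theorem Squarefree.dvd_of_forall_prime_dvd {α : Type*} [CommMonoidWithZero α]
    [UniqueFactorizationMonoid α] [Nontrivial α] {a : α} (ha : Squarefree a) {b : α}
    (h : ∀ p : α, Prime p → p ∣ a → p ∣ b) : a ∣ b := by
  induction a using UniqueFactorizationMonoid.induction_on_prime generalizing b with
  | h₁ => exact absurd ha not_squarefree_zero
  | h₂ x hx => exact hx.dvd
  | h₃ a p _ hp ih =>
    obtain ⟨b', rfl⟩ := h p hp (dvd_mul_right p a)
    refine mul_dvd_mul_left p (ih (ha.squarefree_of_dvd (dvd_mul_left a p)) fun q hq hqa => ?_)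
    refine (hq.dvd_mul.mp (h q hq (dvd_mul_of_dvd_right hqa p))).resolve_left fun hqp => ?_
    have hpa : p ∣ a := (hq.irreducible.associated_of_dvd hp.irreducible hqp).symm.dvd.trans hqa
    exact hp.not_isUnit (ha p (mul_dvd_mul_left p hpa))

theorem Nat.pow_le_two_mul_totient_pow {p : ℕ} (hp : p.Prime) (k : ℕ) :
    p ^ k ≤ 2 * φ (p ^ k) := by
  cases k with
  | zero => simp
  | succ k =>
    rw [totient_prime_pow_succ hp, pow_succ, mul_left_comm]
    exact Nat.mul_le_mul_left _ (by have := hp.two_le; omega)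

theorem Nat.dvd_factorial_two_mul_totient {n : ℕ} (hn : 0 < n) : n ∣ (2 * φ n)! := by
  rw [← factorization_le_iff_dvd hn.ne' (factorial_ne_zero _)]
  intro p
  by_cases hp : p.Prime
  · rw [← hp.pow_dvd_iff_le_factorization (factorial_ne_zero _)]
    refine Nat.dvd_factorial (pow_pos hp.pos _) ((Nat.pow_le_two_mul_totient_pow hp _).trans ?_)
    exact Nat.mul_le_mul_left 2 (Nat.le_of_dvd (totient_pos.mpr hn)
      (totient_dvd_of_dvd (ordProj_dvd n p)))
  · simp [factorization_eq_zero_of_not_prime _ hp]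

theorem Polynomial.associated_cyclotomic_of_irreducible_dvd_X_pow_sub_one {π : ℚ[X]} {e : ℕ}
    (he : 0 < e) (hπ : Irreducible π) (hdvd : π ∣ X ^ e - 1) :
    ∃ n, 0 < n ∧ Associated π (cyclotomic n ℚ) := by
  rw [← prod_cyclotomic_eq_X_pow_sub_one he] at hdvd
  obtain ⟨n, hn, hπn⟩ := hπ.prime.exists_mem_finset_dvd hdvd
  have hn0 : 0 < n := pos_of_mem_divisors hn
  exact ⟨n, hn0, hπ.associated_of_dvd (cyclotomic.irreducible_rat hn0) hπn⟩

theorem Polynomial.dvd_X_pow_sub_one_of_dvd_X_pow_sub_one {f : ℚ[X]} {e m : ℕ} (he : 0 < e)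
    (hf : f ∣ X ^ e - 1) (hm : (2 * f.natDegree)! ∣ m) : f ∣ X ^ m - 1 := by
  have hsep : (X ^ e - C (1 : ℚ)).Separable :=
    separable_X_pow_sub_C 1 (by exact_mod_cast he.ne') one_ne_zero
  rw [map_one] at hsep
  have hf0 : f ≠ 0 := by
    rintro rfl
    exact hsep.ne_zero (zero_dvd_iff.mp hf)
  refine (hsep.squarefree.squarefree_of_dvd hf).dvd_of_forall_prime_dvd fun π hπ hπf => ?_
  obtain ⟨n, hn, hassoc⟩ :=
    associated_cyclotomic_of_irreducible_dvd_X_pow_sub_one he hπ.irreducible (hπf.trans hf)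
  have htot : φ n ≤ f.natDegree := by
    rw [← natDegree_cyclotomic n ℚ]
    exact natDegree_le_of_dvd (hassoc.symm.dvd.trans hπf) hf0
  have hnm : n ∣ m := (dvd_factorial_two_mul_totient hn).trans
    ((factorial_dvd_factorial (by omega)).trans hm)
  obtain ⟨j, rfl⟩ := hnm
  calc π ∣ cyclotomic n ℚ := hassoc.dvd
    _ ∣ X ^ n - 1 := cyclotomic.dvd_X_pow_sub_one n ℚ
    _ ∣ (X ^ n) ^ j - 1 ^ j := sub_dvd_pow_sub_pow _ _ j
    _ = X ^ (n * j) - 1 := by rw [one_pow, pow_mul]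

theorem Polynomial.dvd_X_pow_mul_X_pow_sub_one {f : ℚ[X]} {p e k m : ℕ} (he : 0 < e)
    (hf : f ∣ X ^ p * (X ^ e - 1)) (hk : f.natDegree ≤ k) (hm : (2 * k)! ∣ m) :
    f ∣ X ^ k * (X ^ m - 1) := by
  have hf0 : f ≠ 0 := by
    rintro rfl
    refine mul_ne_zero (pow_ne_zero p X_ne_zero) ?_ (zero_dvd_iff.mp hf)
    simpa using X_pow_sub_C_ne_zero he (1 : ℚ)
  obtain ⟨f₁, f₂, h₁, h₂, rfl⟩ := exists_dvd_and_dvd_of_dvd_mul hf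
  rw [natDegree_mul (left_ne_zero_of_mul hf0) (right_ne_zero_of_mul hf0)] at hk
  refine mul_dvd_mul ?_ (dvd_X_pow_sub_one_of_dvd_X_pow_sub_one he h₂
    ((factorial_dvd_factorial (by omega)).trans hm))
  obtain ⟨i, -, hassoc⟩ := (dvd_prime_pow prime_X p).mp h₁
  have hi : i ≤ k := by
    rw [natDegree_eq_of_degree_eq (degree_eq_degree_of_associated hassoc), natDegree_X_pow] at hk
    omega
  exact hassoc.dvd.trans (pow_dvd_pow X hi)

theorem pow_add_eq_pow_of_torsion {A : Type*} [Ring A] [Algebra ℚ A] {x : A} {p e k m : ℕ}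
    (he : 0 < e) (hx : x ^ (p + e) = x ^ p) (hk : (minpoly ℚ x).natDegree ≤ k)
    (hm : (2 * k)! ∣ m) : x ^ (m + k) = x ^ k := by
  have hdvd : minpoly ℚ x ∣ X ^ p * (X ^ e - 1) := by
    rw [minpoly.dvd_iff]
    simp [mul_sub, ← pow_add, hx]
  obtain ⟨g, hg⟩ := dvd_X_pow_mul_X_pow_sub_one he hdvd hk hm
  rw [← sub_eq_zero]
  simpa [mul_sub, ← pow_add, add_comm] using congrArg (aeval x) hg

theorem mandel_simon_general (d : ℕ) (M : Matrix (Fin d) (Fin d) ℚ)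
    (htor : ∃ p q : ℕ, p ≠ q ∧ M ^ p = M ^ q) :
    M ^ (Nat.factorial (2 * d ^ 2) + d) = M ^ d := by
  obtain ⟨p, q, hpq, hM⟩ := htor
  wlog hlt : p < q generalizing p q
  · exact this q p hpq.symm hM.symm (by omega)
  have hdeg : (minpoly ℚ M).natDegree ≤ d := by
    simpa using natDegree_le_of_dvd (Matrix.minpoly_dvd_charpoly M) M.charpoly_monic.ne_zero
  refine pow_add_eq_pow_of_torsion (p := p) (e := q - p) (by omega) ?_ hdeg
    (factorial_dvd_factorial (by nlinarith))
  rw [Nat.add_sub_cancel' hlt.le, hM]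

theorem mandel_simon (d : ℕ) (hd : 0 < d) (M : Matrix (Fin d) (Fin d) ℚ)
    (htor : ∃ p q : ℕ, p ≠ q ∧ M ^ p = M ^ q) :
    M ^ (Nat.factorial (2 * d ^ 2) + d) = M ^ d :=
  mandel_simon_general d M htor
end

section
/- For every positive integer n, the product ∏_{j=1}^n γ_j(z) of the first n cyclotomic polynomials equals ν_n(z) / gcd(ν_n'(z), ν_n(z)), where ν_n(z) = ∏_{j=1}^n (z^j - 1). -/
/-!
Write `ν = ∏_{j ≤ n} (X ^ j - 1)`. Since `X ^ j - 1 = ∏_{d ∣ j} Φ_d` and exactly `⌊n / d⌋` of the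
numbers `1, …, n` are multiples of `d`, we get `ν = ∏_{d ≤ n} Φ_d ^ ⌊n / d⌋`, a product of positive
powers of pairwise coprime monic irreducibles. In characteristic zero an irreducible `p` is
separable, so `p ∤ p'`; hence if `p` divides `f` exactly `m ≥ 1` times, it divides `f'` exactly
`m - 1` times. Therefore `gcd (f', f) = ∏ p ^ (m - 1)` and `f / gcd (f', f)` is the radical `∏ p`.
-/

open Polynomial Finset Function

theorem Nat.prod_Icc_prod_divisors {M : Type*} [CommMonoid M] (f : ℕ → M) (n : ℕ) :
    ∏ j ∈ Icc 1 n, ∏ d ∈ j.divisors, f d = ∏ d ∈ Icc 1 n, f d ^ (n / d) := by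
  rw [prod_comm' (s' := fun d => {j ∈ Icc 1 n | d ∣ j}) (t' := Icc 1 n)]
  · refine prod_congr rfl fun d _ => ?_
    rw [prod_const, ← Nat.Ioc_filter_dvd_card_eq_div]
    rfl
  · intro j d
    simp only [Nat.mem_divisors, mem_filter, mem_Icc]
    constructor
    · rintro ⟨⟨hj, hjn⟩, hdj, -⟩
      exact ⟨⟨⟨hj, hjn⟩, hdj⟩, Nat.pos_of_dvd_of_pos hdj hj, (Nat.le_of_dvd hj hdj).trans hjn⟩
    · rintro ⟨⟨hj, hdj⟩, -⟩
      exact ⟨hj, hdj, by omega⟩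

theorem Polynomial.prod_X_pow_sub_one_eq_prod_cyclotomic_pow (n : ℕ) (R : Type*) [CommRing R] :
    ∏ j ∈ Icc 1 n, ((X : R[X]) ^ j - 1) = ∏ d ∈ Icc 1 n, cyclotomic d R ^ (n / d) := by
  rw [← Nat.prod_Icc_prod_divisors]
  exact prod_congr rfl fun j hj => (prod_cyclotomic_eq_X_pow_sub_one (mem_Icc.1 hj).1 R).symm

section CharZero

variable {k : Type*} [Field k] [CharZero k]

theorem Polynomial.not_pow_succ_dvd_derivative_pow_succ_mul {p u : k[X]} (hp : Irreducible p)
    (hpu : ¬ p ∣ u) (e : ℕ) : ¬ p ^ (e + 1) ∣ derivative (p ^ (e + 1) * u) := by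
  intro hdvd
  have hsplit : derivative (p ^ (e + 1) * u) =
      p ^ e * (C ((e + 1 : ℕ) : k) * (derivative p * u)) + p ^ (e + 1) * derivative u := by
    rw [derivative_mul, derivative_pow, add_tsub_cancel_right]
    ring
  rw [hsplit, dvd_add_left (dvd_mul_right _ _), pow_succ,
    mul_dvd_mul_iff_left (pow_ne_zero _ hp.ne_zero),
    (isUnit_C.2 (Nat.cast_ne_zero.2 e.succ_ne_zero).isUnit).dvd_mul_left] at hdvd
  exact hpu (hp.separable.dvd_of_dvd_mul_left hdvd)

variable [DecidableEq k] {ι : Type*} {s : Finset ι} {p : ι → k[X]}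

theorem Polynomial.gcd_derivative_prod_pow_succ (hirr : ∀ i ∈ s, Irreducible (p i))
    (hcop : (s : Set ι).Pairwise (IsCoprime on p)) (e : ι → ℕ) :
    gcd (derivative (∏ i ∈ s, p i ^ (e i + 1))) (∏ i ∈ s, p i ^ (e i + 1)) =
      normalize (∏ i ∈ s, p i ^ e i) := by
  classical
  set f := ∏ i ∈ s, p i ^ (e i + 1)
  have hf : f = (∏ i ∈ s, p i ^ e i) * ∏ i ∈ s, p i := by
    simp only [f, pow_succ, prod_mul_distrib]
  obtain ⟨w, hw⟩ : (∏ i ∈ s, p i ^ e i) ∣ derivative f :=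
    prod_dvd_of_coprime (hcop.mono' fun _ _ h => h.pow) fun i hi => by
      simpa using pow_sub_one_dvd_derivative_of_pow_dvd
        (dvd_prod_of_mem (fun i => p i ^ (e i + 1)) hi)
  have hwp : IsCoprime w (∏ i ∈ s, p i) := by
    refine IsCoprime.prod_right fun i hi => isCoprime_comm.1 ((hirr i hi).coprime_iff_not_dvd.2 ?_)
    intro hpw
    have hpu : ¬ p i ∣ ∏ j ∈ s.erase i, p j ^ (e j + 1) :=
      (hirr i hi).coprime_iff_not_dvd.1 <| IsCoprime.prod_right fun j hj =>
        (hcop hi (mem_of_mem_erase hj) (ne_of_mem_erase hj).symm).pow_right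
    refine not_pow_succ_dvd_derivative_pow_succ_mul (hirr i hi) hpu (e i) ?_
    rw [mul_prod_erase s (fun j => p j ^ (e j + 1)) hi, hw, pow_succ]
    exact mul_dvd_mul (dvd_prod_of_mem (fun j => p j ^ e j) hi) hpw
  rw [hw, hf, _root_.gcd_mul_left, ← _root_.normalize_gcd,
    normalize_eq_one.2 ((gcd_isUnit_iff _ _).2 hwp), mul_one]

theorem Polynomial.prod_pow_succ_div_gcd_derivative (hmonic : ∀ i ∈ s, (p i).Monic)
    (hirr : ∀ i ∈ s, Irreducible (p i)) (hcop : (s : Set ι).Pairwise (IsCoprime on p))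
    (e : ι → ℕ) :
    (∏ i ∈ s, p i ^ (e i + 1)) /
        gcd (derivative (∏ i ∈ s, p i ^ (e i + 1))) (∏ i ∈ s, p i ^ (e i + 1)) =
      ∏ i ∈ s, p i := by
  have hg : (∏ i ∈ s, p i ^ e i).Monic := monic_prod_of_monic _ _ fun i hi => (hmonic i hi).pow _
  rw [gcd_derivative_prod_pow_succ hirr hcop, hg.normalize_eq_self, ← mul_div_cancel_left₀
    (∏ i ∈ s, p i) hg.ne_zero, ← prod_mul_distrib]
  simp only [pow_succ]

end CharZero

theorem prod_cyclotomic_eq_div_gcd_general (n : ℕ) :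
    (∏ j ∈ Finset.Icc 1 n, Polynomial.cyclotomic j ℚ) =
      (∏ j ∈ Finset.Icc 1 n, ((Polynomial.X : Polynomial ℚ) ^ j - 1)) /
        gcd (Polynomial.derivative (∏ j ∈ Finset.Icc 1 n, ((Polynomial.X : Polynomial ℚ) ^ j - 1)))
          (∏ j ∈ Finset.Icc 1 n, ((Polynomial.X : Polynomial ℚ) ^ j - 1)) := by
  have hν : ∏ j ∈ Icc 1 n, ((X : ℚ[X]) ^ j - 1) =
      ∏ d ∈ Icc 1 n, cyclotomic d ℚ ^ (n / d - 1 + 1) := by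
    rw [prod_X_pow_sub_one_eq_prod_cyclotomic_pow]
    refine prod_congr rfl fun d hd => ?_
    rw [Nat.sub_add_cancel (Nat.div_pos (mem_Icc.1 hd).2 (mem_Icc.1 hd).1)]
  rw [hν, prod_pow_succ_div_gcd_derivative (fun d _ => cyclotomic.monic d ℚ)
    (fun d hd => cyclotomic.irreducible_rat (mem_Icc.1 hd).1)
    (fun _ _ _ _ hab => cyclotomic.isCoprime_rat hab)]

theorem prod_cyclotomic_eq_div_gcd (n : ℕ) (hn : 0 < n) :
    (∏ j ∈ Finset.Icc 1 n, Polynomial.cyclotomic j ℚ) =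
      (∏ j ∈ Finset.Icc 1 n, ((Polynomial.X : Polynomial ℚ) ^ j - 1)) /
        gcd (Polynomial.derivative (∏ j ∈ Finset.Icc 1 n, ((Polynomial.X : Polynomial ℚ) ^ j - 1)))
          (∏ j ∈ Finset.Icc 1 n, ((Polynomial.X : Polynomial ℚ) ^ j - 1)) :=
  prod_cyclotomic_eq_div_gcd_general n
end

section
/- Let M be a d×d matrix over ℚ and define the (d+2)×(d+2) block matrices A = diag(M^d, N) and B = diag(M^d, O), where N = [[0,1],[0,0]] and O is the 2×2 zero matrix. Then there exists a natural number n with A^n = B if and only if M is torsion (i.e., M^p = M^q for some distinct naturals p, q). -/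
/-!
If `M ^ p = M ^ q` with `p < q`, then `M ^ k` fixes every vector modulo `ker M ^ p`, where
`k = q - p`; since the kernels of the powers of `M` stabilise by the `d`-th power, already
`M ^ (d + k) = M ^ d`, so `M ^ d` is periodic and `A ^ (k + 1) = B`. Conversely, `A ^ n = B`
forces `N ^ n = 0`, hence `n ≥ 2`, and `(M ^ d) ^ n = M ^ d` exhibits `M` as torsion.
-/

open Matrix Module

theorem pow_add_mul_eq_of_pow_add_eq {G : Type*} [Monoid G] {a : G} {n k : ℕ}
    (h : a ^ (n + k) = a ^ n) (j : ℕ) : a ^ (n + j * k) = a ^ n := by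
  induction j with
  | zero => simp
  | succ j ih => rw [add_mul, one_mul, ← add_assoc, pow_add, ih, ← pow_add, h]

theorem Module.End.pow_finrank_add_eq_of_pow_add_eq {K V : Type*} [Field K] [AddCommGroup V]
    [Module K V] [FiniteDimensional K V] {f : End K V} {p k : ℕ} (h : f ^ (p + k) = f ^ p) :
    f ^ (finrank K V + k) = f ^ finrank K V := by
  ext x
  have hker : (f ^ k) x - x ∈ LinearMap.ker (f ^ finrank K V) := by
    refine End.ker_pow_le_ker_pow_finrank f p ?_
    rw [LinearMap.mem_ker, map_sub, ← End.mul_apply, ← pow_add, h, sub_self]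
  rw [pow_add, End.mul_apply, ← sub_eq_zero, ← map_sub, ← LinearMap.mem_ker]
  exact hker

theorem Matrix.pow_card_add_eq_of_pow_add_eq {K n : Type*} [Field K] [Fintype n] [DecidableEq n]
    {M : Matrix n n K} {p k : ℕ} (h : M ^ (p + k) = M ^ p) :
    M ^ (Fintype.card n + k) = M ^ Fintype.card n := by
  apply toLinAlgEquiv'.injective
  have h' : toLinAlgEquiv' M ^ (p + k) = toLinAlgEquiv' M ^ p := by
    simpa only [map_pow] using congrArg toLinAlgEquiv' h
  simpa only [map_pow, finrank_fintype_fun_eq_card] using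
    End.pow_finrank_add_eq_of_pow_add_eq h'

theorem Matrix.pow_card_eq_of_pow_eq_pow {K n : Type*} [Field K] [Fintype n] [DecidableEq n]
    {M : Matrix n n K} {p q : ℕ} (hpq : p < q) (h : M ^ p = M ^ q) (j : ℕ) :
    M ^ (Fintype.card n + j * (q - p)) = M ^ Fintype.card n := by
  refine pow_add_mul_eq_of_pow_add_eq (pow_card_add_eq_of_pow_add_eq (p := p) ?_) j
  rw [Nat.add_sub_cancel' hpq.le, h]

theorem Matrix.nilpotentTwo_pow_eq_zero_iff {R : Type*} [Semiring R] [Nontrivial R] {n : ℕ} :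
    (!![0, 1; 0, 0] : Matrix (Fin 2) (Fin 2) R) ^ n = 0 ↔ 2 ≤ n := by
  constructor
  · intro h
    by_contra! hn
    interval_cases n
    · simpa using congrFun (congrFun h 0) 0
    · simpa using congrFun (congrFun h 0) 1
  · intro hn
    have hsq : (!![0, 1; 0, 0] : Matrix (Fin 2) (Fin 2) R) ^ 2 = 0 := by
      ext i j
      fin_cases i <;> fin_cases j <;> simp [sq]
    rw [← Nat.add_sub_cancel' hn, pow_add, hsq, zero_mul]

theorem mtp_reduces_to_mpp (d : ℕ) (M : Matrix (Fin d) (Fin d) ℚ) :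
    (∃ n : ℕ,
        (Matrix.fromBlocks (M ^ d) 0 0 (!![0, 1; 0, 0] : Matrix (Fin 2) (Fin 2) ℚ)) ^ n =
          Matrix.fromBlocks (M ^ d) 0 0 (0 : Matrix (Fin 2) (Fin 2) ℚ)) ↔
      (∃ p q : ℕ, p ≠ q ∧ M ^ p = M ^ q) := by
  simp only [fromBlocks_diagonal_pow, fromBlocks_inj, nilpotentTwo_pow_eq_zero_iff, true_and,
    ← pow_mul]
  constructor
  · rintro ⟨n, hM, hn⟩
    by_cases hd : d * n = d
    · have hd0 : d = 0 := by nlinarith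
      subst hd0
      exact ⟨0, 1, zero_ne_one, Subsingleton.elim _ _⟩
    · exact ⟨d * n, d, hd, hM⟩
  · rintro ⟨p, q, hpq, h⟩
    wlog hlt : p < q generalizing p q
    · exact this q p hpq.symm h.symm (by omega)
    refine ⟨q - p + 1, ?_, by omega⟩
    rw [mul_add_one, add_comm]
    simpa only [Fintype.card_fin] using pow_card_eq_of_pow_eq_pow hlt h d
end
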